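/- arXiv:2210.00456 — 16 statements merged into one kernel-verified Lean document; each statement's English description precedes it below -/
import Mathlib

section
/- Let M be a right R-module with endomorphism ring S = End_R(M), and let m1, m2 ∈ M. The following are equivalent: (1) there exist f ∈ S and a ∈ R with m1 = m2·a = f(m2) and m1 = f(m1); (2) there exist f ∈ S and a ∈ R with m1 = m2·a = f(m2) and m1 = m1·a; (3) there exist f ∈ S and a ∈ R with m1 = m2·a = f(m2) and m1 = f(m1) = m1·a. -/
open MulOpposite

/-- equivalent formulations of the Mitsch relation on a right R-module M
(right module encoded as `Module Rᵐᵒᵖ M`, so `m·a = op a • m`). -/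
theorem mitsch_equiv {R M : Type*} [Ring R] [AddCommGroup M] [Module Rᵐᵒᵖ M]
    (m1 m2 : M) :
    List.TFAE [
      (∃ (f : M →ₗ[Rᵐᵒᵖ] M) (a : R),
        m1 = op a • m2 ∧ m1 = f m2 ∧ m1 = f m1),
      (∃ (f : M →ₗ[Rᵐᵒᵖ] M) (a : R),
        m1 = op a • m2 ∧ m1 = f m2 ∧ m1 = op a • m1),
      (∃ (f : M →ₗ[Rᵐᵒᵖ] M) (a : R),
        m1 = op a • m2 ∧ m1 = f m2 ∧ m1 = f m1 ∧ m1 = op a • m1)] := by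
  tfae_have 1 → 3 := by
    rintro ⟨f, a, h1, h2, h3⟩
    refine ⟨f, a, h1, h2, h3, ?_⟩
    have : op a • m1 = m1 := by
      conv_lhs => rw [h2, ← map_smul, ← h1, ← h3]
    exact this.symm
  tfae_have 2 → 3 := by
    rintro ⟨f, a, h1, h2, h3⟩
    refine ⟨f, a, h1, h2, ?_, h3⟩
    have : f m1 = m1 := by
      conv_lhs => rw [h1, map_smul, ← h2, ← h3]
    exact this.symm
  tfae_have 3 → 1 := by
    rintro ⟨f, a, h1, h2, h3, _⟩
    exact ⟨f, a, h1, h2, h3⟩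
  tfae_have 3 → 2 := by
    rintro ⟨f, a, h1, h2, _, h4⟩
    exact ⟨f, a, h1, h2, h4⟩
  tfae_finish
end

section
/- The Mitsch relation ≤_M on a module M, defined by m1 ≤_M m2 iff there exist f ∈ End_R(M) and a ∈ R with m1 = m2·a = f(m2) and m1 = f(m1), is a partial order (reflexive, antisymmetric, and transitive) on M. -/
open MulOpposite

/-- The Mitsch relation on a right R-module (encoded via `Module Rᵐᵒᵖ M`,
so `m·a = op a • m`). -/
def MitschLE {R M : Type*} [Ring R] [AddCommGroup M] [Module Rᵐᵒᵖ M]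
    (m1 m2 : M) : Prop :=
  ∃ (f : M →ₗ[Rᵐᵒᵖ] M) (a : R), m1 = op a • m2 ∧ m1 = f m2 ∧ m1 = f m1

/-- the Mitsch relation is a partial order on M. -/
theorem mitsch_isPartialOrder {R M : Type*} [Ring R] [AddCommGroup M] [Module Rᵐᵒᵖ M] :
    (∀ m : M, MitschLE (R := R) m m) ∧
    (∀ m1 m2 : M, MitschLE (R := R) m1 m2 → MitschLE (R := R) m2 m1 → m1 = m2) ∧
    (∀ m1 m2 m3 : M, MitschLE (R := R) m1 m2 → MitschLE (R := R) m2 m3 →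
      MitschLE (R := R) m1 m3) := by
  refine ⟨fun m => ⟨LinearMap.id, 1, by simp⟩, ?_, ?_⟩
  · rintro m1 m2 ⟨f, a, ha, hf2, hf1⟩ ⟨g, b, hb, hg1, hg2⟩
    -- m2 = g m1 = g (op a • m2) = op a • g m2 = op a • m2 = m1
    calc m1 = op a • m2 := ha
    _ = op a • g m2 := by rw [← hg2]
    _ = g (op a • m2) := (g.map_smul _ _).symm
    _ = g m1 := by rw [← ha]
    _ = m2 := hg1.symm
  · rintro m1 m2 m3 ⟨f, a, ha, hf2, hf1⟩ ⟨g, b, hb, hg3, hg2⟩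
    have hgm1 : g m1 = m1 := by
      rw [ha, g.map_smul, ← hg2, ← ha]
    refine ⟨f.comp g, b * a, ?_, ?_, ?_⟩
    · rw [ha, hb, smul_smul, ← op_mul]
    · simp only [LinearMap.comp_apply, ← hg3, ← hf2]
    · simp only [LinearMap.comp_apply, hgm1, ← hf1]
end

section
/- Let M be a module and m1, m2 ∈ M. Then m1 ≤_M m2 if and only if for every positive integer n there exist f ∈ End_R(M) and a ∈ R with m1 = m2·aⁿ = fⁿ(m2) and m1 = fⁿ(m1). -/
open MulOpposite

/-- `m1 ≤_M m2` iff for every positive integer `n` there exist `f` and `a`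
with `m1 = m2·aⁿ = fⁿ(m2)` and `m1 = fⁿ(m1)`. -/
theorem mitsch_iff_powers {R M : Type*} [Ring R] [AddCommGroup M] [Module Rᵐᵒᵖ M]
    (m1 m2 : M) :
    MitschLE (R := R) m1 m2 ↔
      ∀ n : ℕ, 0 < n → ∃ (f : Module.End Rᵐᵒᵖ M) (a : R),
        m1 = op (a ^ n) • m2 ∧ m1 = (f ^ n) m2 ∧ m1 = (f ^ n) m1 := by
  constructor
  · rintro ⟨f, a, h1, h2, h3⟩ n hn
    -- key: m1 = op a • m1
    have key : op a • m1 = m1 := by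
      calc op a • m1 = op a • f m2 := by rw [← h2]
        _ = f (op a • m2) := (map_smul f (op a) m2).symm
        _ = f m1 := by rw [← h1]
        _ = m1 := h3.symm
    -- fⁿ m1 = m1
    have hf1 : ∀ k : ℕ, (f ^ k) m1 = m1 := by
      intro k
      induction k with
      | zero => simp
      | succ k ih => rw [pow_succ, Module.End.mul_apply, ← h3, ih]
    have ha1 : ∀ k : ℕ, op (a ^ k) • m1 = m1 := by
      intro k
      induction k with
      | zero => simp
      | succ k ih => rw [pow_succ', op_mul, mul_smul, key, ih]
    refine ⟨f, a, ?_, ?_, ?_⟩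
    · obtain ⟨k, rfl⟩ := Nat.exists_eq_succ_of_ne_zero hn.ne'
      rw [pow_succ', op_mul, mul_smul, ← h1, ha1]
    · obtain ⟨k, rfl⟩ := Nat.exists_eq_succ_of_ne_zero hn.ne'
      rw [pow_succ, Module.End.mul_apply, ← h2, hf1]
    · rw [hf1]
  · intro h
    obtain ⟨f, a, h1, h2, h3⟩ := h 1 one_pos
    exact ⟨f, a, by simpa using h1, by simpa using h2, by simpa using h3⟩
end

section
/- Let R be a ring and a, b ∈ R. Then a ≤_M b (i.e., there exist x, y ∈ R with a = xb = by and a = xa) if and only if there exist x, y ∈ R such that a = bxⁿ = yⁿb and a = yⁿa for every positive integer n. -/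
/-- in a ring `R`, `a ≤_M b` (there exist `x, y` with `a = xb = by`, `a = xa`)
iff there exist `x, y` such that `a = b * xⁿ = yⁿ * b` and `a = yⁿ * a`
for every positive integer `n`. -/
theorem ring_mitsch_iff_powers {R : Type*} [Ring R] (a b : R) :
    (∃ x y : R, a = x * b ∧ a = b * y ∧ a = x * a) ↔
      ∃ x y : R, ∀ n : ℕ, 0 < n →
        a = b * x ^ n ∧ a = y ^ n * b ∧ a = y ^ n * a := by
  constructor
  · rintro ⟨x, y, hxb, hby, hxa⟩
    have hay : a = a * y := by
      calc a = x * a := hxa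
        _ = x * (b * y) := by rw [← hby]
        _ = (x * b) * y := by rw [mul_assoc]
        _ = a * y := by rw [← hxb]
    refine ⟨y, x, ?_⟩
    intro n hn
    induction n with
    | zero => exact absurd hn (by simp)
    | succ m ih =>
      rcases Nat.eq_zero_or_pos m with hm | hm
      · subst hm; simp [pow_one, ← hby, ← hxb, ← hxa]
      · obtain ⟨h1, h2, h3⟩ := ih hm
        refine ⟨?_, ?_, ?_⟩
        · calc a = a * y := hay
            _ = (b * y ^ m) * y := by rw [← h1]
            _ = b * y ^ (m + 1) := by rw [pow_succ, mul_assoc]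
        · calc a = x * a := hxa
            _ = x * (x ^ m * b) := by rw [← h2]
            _ = x ^ (m + 1) * b := by rw [pow_succ', mul_assoc]
        · calc a = x * a := hxa
            _ = x * (x ^ m * a) := by rw [← h3]
            _ = x ^ (m + 1) * a := by rw [pow_succ', mul_assoc]
  · rintro ⟨x, y, h⟩
    obtain ⟨h1, h2, h3⟩ := h 1 one_pos
    simp only [pow_one] at h1 h2 h3
    exact ⟨y, x, h2, h1, h3⟩
end

section
/- Let M be a module, N a direct summand of M, and m1, m2 ∈ N. If m1 ≤_M m2 as elements of the module N (using endomorphisms of N), then m1 ≤_M m2 as elements of M (using endomorphisms of M). -/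
open MulOpposite

theorem MitschLE.map_of_leftInverse {R M N : Type*} [Ring R] [AddCommGroup M] [AddCommGroup N]
    [Module Rᵐᵒᵖ M] [Module Rᵐᵒᵖ N] (i : N →ₗ[Rᵐᵒᵖ] M) (p : M →ₗ[Rᵐᵒᵖ] N)
    (hpi : Function.LeftInverse p i) {m1 m2 : N} (h : MitschLE (R := R) m1 m2) :
    MitschLE (R := R) (i m1) (i m2) := by
  obtain ⟨f, a, h_smul, h_f₂, h_f₁⟩ := h
  refine ⟨i ∘ₗ f ∘ₗ p, a, ?_, ?_, ?_⟩
  · rw [h_smul, map_smul]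
  · simp only [LinearMap.comp_apply, hpi m2, ← h_f₂]
  · simp only [LinearMap.comp_apply, hpi m1, ← h_f₁]

/-- if `N` is a direct summand of `M` (with complement `K`) and
`m1 ≤_M m2` holds in the module `N`, then it holds in `M`. -/
theorem mitsch_of_directSummand {R M : Type*} [Ring R] [AddCommGroup M]
    [Module Rᵐᵒᵖ M] (N K : Submodule Rᵐᵒᵖ M) (hcompl : IsCompl N K)
    (m1 m2 : N) (h : MitschLE (R := R) m1 m2) :
    MitschLE (R := R) (m1 : M) (m2 : M) :=
  h.map_of_leftInverse N.subtype (N.projectionOnto K hcompl)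
    (Submodule.projectionOnto_apply_left hcompl)
end

section
/- Let M be a module, N a fully invariant submodule of M (i.e., f(N) ⊆ N for every f ∈ End_R(M)), and m1, m2 ∈ N. If m1 ≤_M m2 in M, then m1 ≤_M m2 in N (i.e., the witnessing endomorphism can be taken to be an endomorphism of N). -/
open MulOpposite

/-- if `N` is a fully invariant submodule of `M` and `m1 ≤_M m2` in `M`
for `m1, m2 ∈ N`, then `m1 ≤_M m2` in the module `N`. -/
theorem mitsch_restrict_fullyInvariant {R M : Type*} [Ring R] [AddCommGroup M]
    [Module Rᵐᵒᵖ M] (N : Submodule Rᵐᵒᵖ M)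
    (hN : ∀ (f : M →ₗ[Rᵐᵒᵖ] M) (x : M), x ∈ N → f x ∈ N)
    (m1 m2 : N) (h : MitschLE (R := R) (m1 : M) (m2 : M)) :
    MitschLE (R := R) m1 m2 := by
  obtain ⟨f, a, h1, h2, h3⟩ := h
  refine ⟨f.restrict (fun x hx => hN f x hx), a, ?_, ?_, ?_⟩ <;>
    · apply Subtype.ext
      simpa using ‹_›
end

section
/- Let M be a module and N a fully invariant submodule of M. If m1 ≤_M m2 in M, then m1 + N ≤_M m2 + N in the quotient module M/N. -/
open MulOpposite

/-- if `N` is a fully invariant submodule of `M` and `m1 ≤_M m2` in `M`,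
then `m1 + N ≤_M m2 + N` in the quotient module `M/N`. -/
theorem mitsch_quotient_fullyInvariant {R M : Type*} [Ring R] [AddCommGroup M]
    [Module Rᵐᵒᵖ M] (N : Submodule Rᵐᵒᵖ M)
    (hN : ∀ (f : M →ₗ[Rᵐᵒᵖ] M) (x : M), x ∈ N → f x ∈ N)
    (m1 m2 : M) (h : MitschLE (R := R) m1 m2) :
    MitschLE (R := R) (Submodule.Quotient.mk (p := N) m1)
      (Submodule.Quotient.mk (p := N) m2) := by
  obtain ⟨f, a, h1, h2, h3⟩ := h
  refine ⟨Submodule.mapQ N N f (fun x hx => hN f x hx), a, ?_, ?_, ?_⟩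
  · rw [← Submodule.Quotient.mk_smul, ← h1]
  · rw [Submodule.mapQ_apply, ← h2]
  · rw [Submodule.mapQ_apply, ← h3]
end

section
/- Let M be a module and m1, m2 ∈ M. If m1 ≤^- m2 (the minus order), then m1 ≤_M m2 (the Mitsch order). -/
open MulOpposite

/-- The minus order: there is `φ` in the dual `M* = Hom_R(M, R)` with
`m1 = m1·φ(m1)`, `m1φ = m2φ` (as maps `x ↦ mᵢ·φ(x)`) and `φ(m1) = φ(m2)`. -/
def MinusLE {R M : Type*} [Ring R] [AddCommGroup M] [Module Rᵐᵒᵖ M]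
    (m1 m2 : M) : Prop :=
  ∃ φ : M →ₗ[Rᵐᵒᵖ] R, m1 = op (φ m1) • m1 ∧
    (∀ x : M, op (φ x) • m1 = op (φ x) • m2) ∧ φ m1 = φ m2

/-- the minus order implies the Mitsch order. -/
theorem minus_imp_mitsch {R M : Type*} [Ring R] [AddCommGroup M] [Module Rᵐᵒᵖ M]
    (m1 m2 : M) (h : MinusLE (R := R) m1 m2) : MitschLE (R := R) m1 m2 := by
  obtain ⟨φ, h1, h2, h3⟩ := h
  refine ⟨{ toFun := fun x => op (φ x) • m1, map_add' := ?_, map_smul' := ?_ }, φ m1, ?_, ?_, ?_⟩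
  · intro x y; simp [add_smul]
  · intro r x
    simp only [map_smul, RingHom.id_apply]
    rw [show op (r • φ x) = r * op (φ x) by
      induction r using MulOpposite.rec' with
      | _ r => simp [MulOpposite.smul_eq_mul_unop], mul_smul]
  · rw [← h2, ← h1]
  · simpa [← h3] using h1
  · exact h1
end

section
/- Let M be a module and m1, m2 ∈ M. If m1 ≤_M m2 and both the right annihilator of m2 in R and the left annihilator of m2 in End_R(M) are zero, then m1 ≤_J m2, i.e., the witnessing f and a can be chosen to be idempotents. -/
open MulOpposite

/-- The Jones order: witnesses are idempotent. -/
def JonesLE {R M : Type*} [Ring R] [AddCommGroup M] [Module Rᵐᵒᵖ M]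
    (m1 m2 : M) : Prop :=
  ∃ (f : Module.End Rᵐᵒᵖ M) (a : R), f * f = f ∧ a * a = a ∧
    m1 = op a • m2 ∧ m1 = f m2

/-- if `m1 ≤_M m2`, `r_R(m2) = 0` and `l_S(m2) = 0`, then `m1 ≤_J m2`. -/
theorem mitsch_imp_jones_of_ann_zero {R M : Type*} [Ring R] [AddCommGroup M]
    [Module Rᵐᵒᵖ M] (m1 m2 : M) (h : MitschLE (R := R) m1 m2)
    (hr : ∀ a : R, op a • m2 = 0 → a = 0)
    (hl : ∀ f : M →ₗ[Rᵐᵒᵖ] M, f m2 = 0 → f = 0) :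
    JonesLE (R := R) m1 m2 := by
  obtain ⟨f, a, ha, hf, hfix⟩ := h
  have hidem : f ∘ₗ f - f = 0 := by
    apply hl
    simp only [LinearMap.sub_apply, LinearMap.comp_apply, ← hf, ← hfix, sub_self]
  have hf2 : f * f = f := by
    have := sub_eq_zero.mp hidem
    exact this
  have ha2 : a * a = a := by
    apply sub_eq_zero.mp
    apply hr
    have h1 : op (a * a) • m2 = m1 := by
      have : f (op a • m2) = op a • f m2 := f.map_smul _ _
      rw [← ha, ← hf] at this
      rw [← hfix] at this
      calc op (a * a) • m2 = op a • op a • m2 := by rw [← mul_smul]; rfl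
        _ = op a • m1 := by rw [← ha]
        _ = m1 := this.symm
    rw [op_sub, sub_smul, h1, ha, sub_self]
  exact ⟨f, a, hf2, ha2, ha, hf⟩
end

section
/- Let M be a module and m1, m2 ∈ M with m1 ≤_M m2. If m1 is regular in the sense of Zelmanowitz (there exists φ ∈ Hom_R(M, R) with m1 = m1·φ(m1)), then m1 ≤_J m2. -/
open MulOpposite

/-- if `m1 ≤_M m2` and `m1` is Zelmanowitz regular
(`m1 = m1·φ(m1)` for some `φ ∈ Hom_R(M, R)`), then `m1 ≤_J m2`. -/
theorem mitsch_imp_jones_of_regular {R M : Type*} [Ring R] [AddCommGroup M]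
    [Module Rᵐᵒᵖ M] (m1 m2 : M) (h : MitschLE (R := R) m1 m2)
    (hreg : ∃ φ : M →ₗ[Rᵐᵒᵖ] R, m1 = op (φ m1) • m1) :
    JonesLE (R := R) m1 m2 := by
  obtain ⟨g, a0, h1, h2, h3⟩ := h
  obtain ⟨φ, hb⟩ := hreg
  set b : R := φ m1 with hbdef
  -- b is idempotent
  have hbb : b * b = b := by
    conv_lhs => rw [hbdef]
    have : φ (op b • m1) = op b • φ m1 := (φ.map_smul (op b) m1)
    rw [← hb] at this
    rw [← hbdef] at this ⊢
    have hsm : op b • φ m1 = φ m1 * b := rfl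
    rw [← hsm]
    rw [← this]
  -- m1 · a0 = m1
  have ha0 : op a0 • m1 = m1 := by
    have : g m1 = g (op a0 • m2) := by rw [← h1]
    rw [g.map_smul, ← h2, ← h3] at this
    exact this.symm
  -- the idempotent scalar
  refine ⟨?_, a0 * b, ?_, ?_, ?_, ?_⟩
  · -- endomorphism e x = op (φ (g x)) • m1
    exact
      { toFun := fun x => op (φ (g x)) • m1
        map_add' := by intro x y; simp [mul_smul, add_smul]
        map_smul' := by
          intro r x
          simp only [g.map_smul, φ.map_smul, RingHom.id_apply]
          have : op ((r • (φ (g x)) : R)) = r * op (φ (g x)) := rfl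
          rw [this, mul_smul] }
  · -- idempotent endomorphism
    ext x
    simp only [Module.End.mul_apply, LinearMap.coe_mk, AddHom.coe_mk]
    have h4 : g (op (φ (g x)) • m1) = op (φ (g x)) • m1 := by
      rw [g.map_smul, ← h3]
    rw [h4, φ.map_smul]
    have hsm : op (φ (g x)) • φ m1 = φ m1 * φ (g x) := rfl
    rw [hsm]
    have : op (φ m1 * φ (g x)) • m1 = op (φ (g x)) • (op (φ m1) • m1) := by
      rw [← mul_smul]; rfl
    rw [this, ← hb]
  · -- idempotent scalar
    have : b * (a0 * b) = b := by
      have h5 : φ (op a0 • m1) = op a0 • φ m1 := φ.map_smul (op a0) m1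
      rw [ha0] at h5
      have hsm : op a0 • φ m1 = φ m1 * a0 := rfl
      rw [hsm, ← hbdef] at h5
      calc b * (a0 * b) = (b * a0) * b := (mul_assoc _ _ _).symm
        _ = φ m1 * b := by rw [← hbdef, ← h5]
        _ = b * b := by rw [hbdef]
        _ = b := hbb
    calc a0 * b * (a0 * b) = a0 * (b * (a0 * b)) := mul_assoc _ _ _
      _ = a0 * b := by rw [this]
  · -- m1 = op (a0 * b) • m2
    rw [show (op (a0 * b) : Rᵐᵒᵖ) = op b * op a0 from rfl, mul_smul, ← h1, ← hb]
  · -- m1 = e m2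
    simp only [LinearMap.coe_mk, AddHom.coe_mk]
    rw [← h2, ← hb]
end

section
/- Let M be a module and m1, m2 ∈ M. If m1 ≤_M m2, then m2·R = m1·R ⊕ (m2 − m1)·R, i.e., m1 is below m2 in the direct sum order. -/
open MulOpposite

/-- if `m1 ≤_M m2` then `m2R = m1R ⊕ (m2 - m1)R` (internal direct sum),
i.e. `m1 ≤^⊕ m2` in the direct sum order. -/
theorem mitsch_imp_directSum {R M : Type*} [Ring R] [AddCommGroup M]
    [Module Rᵐᵒᵖ M] (m1 m2 : M) (h : MitschLE (R := R) m1 m2) :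
    Submodule.span Rᵐᵒᵖ {m2} =
      Submodule.span Rᵐᵒᵖ {m1} ⊔ Submodule.span Rᵐᵒᵖ {m2 - m1} ∧
    Submodule.span Rᵐᵒᵖ {m1} ⊓ Submodule.span Rᵐᵒᵖ {m2 - m1} = ⊥ := by
  obtain ⟨f, a, ha, hf2, hf1⟩ := h
  constructor
  · apply le_antisymm
    · rw [Submodule.span_singleton_le_iff_mem]
      have key := Submodule.add_mem (Submodule.span Rᵐᵒᵖ {m1} ⊔ Submodule.span Rᵐᵒᵖ {m2 - m1})
        (Submodule.mem_sup_left (Submodule.mem_span_singleton_self m1))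
        (Submodule.mem_sup_right (Submodule.mem_span_singleton_self (m2 - m1)))
      have e : m1 + (m2 - m1) = m2 := by abel
      rw [e] at key
      exact key
    · apply sup_le <;> rw [Submodule.span_singleton_le_iff_mem]
      · exact ha ▸ Submodule.smul_mem _ _ (Submodule.mem_span_singleton_self m2)
      · have : m2 - m1 = (1 - op a) • m2 := by rw [sub_smul, one_smul, ← ha]
        exact this ▸ Submodule.smul_mem _ _ (Submodule.mem_span_singleton_self m2)
  · rw [eq_bot_iff]
    intro x hx
    rw [Submodule.mem_inf] at hx
    obtain ⟨hx1, hx2⟩ := hx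
    rw [Submodule.mem_span_singleton] at hx1 hx2
    obtain ⟨r, hr⟩ := hx1
    obtain ⟨s, hs⟩ := hx2
    have h1 : f x = x := by rw [← hr, map_smul, ← hf1, hr]
    have h2 : f x = 0 := by
      rw [← hs, map_smul, map_sub, ← hf2, ← hf1, sub_self, smul_zero]
    rw [Submodule.mem_bot, ← h1, h2]
end

section
/- Let M be a module and m1, m2 ∈ M with m1 ≤_M m2. Then: (1) if m1 is left invertible (φ(m1) = 1 for some φ ∈ Hom_R(M, R)), then m1 = m2; (2) if m2 ∈ m1·R, then m1 = m2; (3) if m2 ∈ End_R(M)·m1, then m1 = m2; (4) m2 − m1 ≤_M m2. -/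
open MulOpposite

/-- consequences of `m1 ≤_M m2`. -/
theorem mitsch_max_conditions {R M : Type*} [Ring R] [AddCommGroup M]
    [Module Rᵐᵒᵖ M] (m1 m2 : M) (h : MitschLE (R := R) m1 m2) :
    ((∃ φ : M →ₗ[Rᵐᵒᵖ] R, φ m1 = 1) → m1 = m2) ∧
    ((∃ b : R, m2 = op b • m1) → m1 = m2) ∧
    ((∃ g : M →ₗ[Rᵐᵒᵖ] M, m2 = g m1) → m1 = m2) ∧
    MitschLE (R := R) (m2 - m1) m2 := by
  obtain ⟨f, a, h1, h2, h3⟩ := h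
  have key3 : ∀ g : M →ₗ[Rᵐᵒᵖ] M, m2 = g m1 → m1 = m2 := by
    intro g hg
    have hp2 : g (f m2) = m2 := by rw [← h2, ← hg]
    have hp1 : g (f m1) = m2 := by rw [← h3, ← hg]
    have hz : m2 - m1 = 0 := by
      have e : m2 - m1 = g (f m1) - m1 := by rw [hp1]
      rw [e, h1, map_smul, map_smul, ← smul_sub, hp2, sub_self, smul_zero]
    exact (sub_eq_zero.mp hz).symm
  refine ⟨?_, ?_, fun ⟨g, hg⟩ => key3 g hg, ?_⟩
  · rintro ⟨φ, hφ⟩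
    refine key3
      { toFun := fun x => op (φ x) • m2
        map_add' := by intro x y; simp [op_add, add_smul]
        map_smul' := by intro c y; simp [mul_smul] } ?_
    simp [hφ]
  · rintro ⟨b, hb⟩
    calc m1 = f m2 := h2
      _ = f (op b • m1) := by rw [← hb]
      _ = op b • f m1 := map_smul f _ _
      _ = op b • m1 := by rw [← h3]
      _ = m2 := hb.symm
  · refine ⟨LinearMap.id - f, 1 - a, ?_, ?_, ?_⟩
    · rw [h1]; simp [op_sub, sub_smul]
    · simp [← h2]
    · simp only [LinearMap.sub_apply, LinearMap.id_apply, map_sub]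
      rw [← h2, ← h3]
      abel
end

section
/- Let M be a module and m ∈ M. If the right annihilator of m in R is zero, or if for every b ∈ r_R(m) the element b + 1 is invertible in R, then m is a maximal element of M with respect to the Mitsch order, i.e., m ≤_M n implies m = n. -/
open MulOpposite

/-- if `r_R(m) = 0`, or `b + 1` is a unit for every `b ∈ r_R(m)`,
then `m` is maximal with respect to the Mitsch order. -/
theorem mitsch_maximal {R M : Type*} [Ring R] [AddCommGroup M]
    [Module Rᵐᵒᵖ M] (m : M)
    (hyp : (∀ b : R, op b • m = 0 → b = 0) ∨
           (∀ b : R, op b • m = 0 → IsUnit (b + 1))) :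
    ∀ n : M, MitschLE (R := R) m n → m = n := by
  rintro n ⟨f, a, h1, h2, h3⟩
  have ham : op a • m = m := by
    calc op a • m = op a • f n := by rw [← h2]
    _ = f (op a • n) := (f.map_smul _ _).symm
    _ = f m := by rw [← h1]
    _ = m := h3.symm
  have hann : op (a - 1) • m = 0 := by
    rw [op_sub, sub_smul, ham, op_one, one_smul, sub_self]
  rcases hyp with h | h
  · have := h _ hann
    have ha : a = 1 := sub_eq_zero.mp this
    rw [h1, ha, op_one, one_smul]
  · obtain ⟨u, hu⟩ := h _ hann
    have hua : (u : R) = a := by rw [hu, sub_add_cancel]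
    have hn : n = op ((u⁻¹ : Rˣ) : R) • m := by
      rw [h1, smul_smul, ← op_mul, ← hua, Units.mul_inv, op_one, one_smul]
    have : f n = n := by
      rw [hn, f.map_smul, ← h3]
    rw [h2, this]
end

section
/- Let M be a module and m1, m2 ∈ M with m1 ≤_M m2. If b lies in the center of R, then m1·b ≤_M m2·b. If g lies in the center of End_R(M), then g(m1) ≤_M g(m2). -/
open MulOpposite

/-- the Mitsch order is compatible with multiplication by central
scalars and central endomorphisms. -/
theorem mitsch_central {R M : Type*} [Ring R] [AddCommGroup M]
    [Module Rᵐᵒᵖ M] (m1 m2 : M) (h : MitschLE (R := R) m1 m2) :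
    (∀ b : R, b ∈ Set.center R → MitschLE (R := R) (op b • m1) (op b • m2)) ∧
    (∀ g : Module.End Rᵐᵒᵖ M, g ∈ Set.center (Module.End Rᵐᵒᵖ M) →
      MitschLE (R := R) (g m1) (g m2)) := by
  obtain ⟨f, a, h1, h2, h3⟩ := h
  constructor
  · intro b hb
    refine ⟨f, a, ?_, ?_, ?_⟩
    · rw [h1, smul_smul, smul_smul, ← op_mul, ← op_mul, hb.comm a]
    · rw [map_smul, ← h2]
    · rw [map_smul, ← h3]
  · intro g hg
    have hcomm : g * f = f * g := hg.comm f
    refine ⟨f, a, ?_, ?_, ?_⟩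
    · rw [h1, map_smul]
    · have := congrArg (· m2) hcomm
      simp only [Module.End.mul_apply] at this
      rw [← this, ← h2]
    · have := congrArg (· m1) hcomm
      simp only [Module.End.mul_apply] at this
      rw [← this, ← h3]
end

section
/- Let M be a module over a right duo ring R (i.e., for all a, b ∈ R there exists c ∈ R with ab = bc, equivalently every right ideal is two-sided). If m1 ≤_M m2, then m1·b ≤_M m2·b for every b ∈ R. -/
open MulOpposite

/-- over a right duo ring (`∀ a b, ∃ c, a * b = b * c`),
the Mitsch order is compatible with right scalar multiplication. -/
theorem mitsch_smul_of_rightDuo {R M : Type*} [Ring R] [AddCommGroup M]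
    [Module Rᵐᵒᵖ M] (hduo : ∀ a b : R, ∃ c : R, a * b = b * c)
    (m1 m2 : M) (h : MitschLE (R := R) m1 m2) :
    ∀ b : R, MitschLE (R := R) (op b • m1) (op b • m2) := by
  intro b
  obtain ⟨f, a, h1, h2, h3⟩ := h
  obtain ⟨c, hc⟩ := hduo a b
  refine ⟨f, c, ?_, ?_, ?_⟩
  · rw [smul_smul, ← op_mul, ← hc, op_mul, ← smul_smul, ← h1]
  · rw [map_smul, ← h2]
  · rw [map_smul, ← h3]
end

section
/- Let M be a module and m ∈ M such that the cyclic submodule m·R is fully invariant in M. Then for every idempotent f ∈ End_R(M), f(m) ≤_M m. -/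
open MulOpposite

/-- if the cyclic submodule `m·R` is fully invariant in `M`, then
`f(m) ≤_M m` for every idempotent endomorphism `f`. -/
theorem idem_apply_mitsch_le {R M : Type*} [Ring R] [AddCommGroup M]
    [Module Rᵐᵒᵖ M] (m : M)
    (hfi : ∀ (g : M →ₗ[Rᵐᵒᵖ] M) (x : M), x ∈ Submodule.span Rᵐᵒᵖ ({m} : Set M) →
      g x ∈ Submodule.span Rᵐᵒᵖ ({m} : Set M))
    (f : Module.End Rᵐᵒᵖ M) (hf : f * f = f) :
    MitschLE (R := R) (f m) m := by
  have hm : f m ∈ Submodule.span Rᵐᵒᵖ ({m} : Set M) :=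
    hfi f m (Submodule.mem_span_singleton_self m)
  obtain ⟨a, ha⟩ := Submodule.mem_span_singleton.mp hm
  refine ⟨f, a.unop, ?_, rfl, ?_⟩
  · simp [ha]
  · have := congrArg (fun g : Module.End Rᵐᵒᵖ M => g m) hf
    exact this.symm
end
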